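/- arXiv:hep-th/0011174 — 2 statements merged into one kernel-verified Lean document; each statement's English description precedes it below -/
import Mathlib

section
/- For every A ∈ SL(2,ℂ) there exists a unique real 4×4 matrix Λ(A) satisfying S(A)⁻¹ γ^μ S(A) = Σ_{ν=0}^{3} Λ(A)^μ_ν γ^ν for all μ ∈ {0,1,2,3}; this Λ(A) satisfies Λ(A)ᵀ η Λ(A) = η (i.e. it is a Lorentz transformation), and the assignment A ↦ Λ(A) is a group homomorphism: Λ(AB) = Λ(A)Λ(B). -/
open Matrix

noncomputable section

/-- Gamma matrices in the chiral representation. -/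
def γ : Fin 4 → Matrix (Fin 4) (Fin 4) ℂ :=
  ![!![0, 0, 1, 0; 0, 0, 0, 1; 1, 0, 0, 0; 0, 1, 0, 0],
    !![0, 0, 0, -1; 0, 0, -1, 0; 0, 1, 0, 0; 1, 0, 0, 0],
    !![0, 0, 0, Complex.I; 0, 0, -Complex.I, 0; 0, -Complex.I, 0, 0; Complex.I, 0, 0, 0],
    !![0, 0, -1, 0; 0, 0, 0, 1; 1, 0, 0, 0; 0, -1, 0, 0]]

/-- The Minkowski metric η = diag(1,−1,−1,−1) as a real 4×4 matrix. -/
def ηR : Matrix (Fin 4) (Fin 4) ℝ := Matrix.diagonal ![1, -1, -1, -1]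

/-- The spinor representation S(A) = [[A,0],[0,(A†)⁻¹]] of SL(2,ℂ) on ℂ⁴. -/
def Smap (A : Matrix.SpecialLinearGroup (Fin 2) ℂ) : Matrix (Fin 4) (Fin 4) ℂ :=
  Matrix.reindex finSumFinEquiv finSumFinEquiv
    (Matrix.fromBlocks (A : Matrix (Fin 2) (Fin 2) ℂ) 0 0 (((A : Matrix (Fin 2) (Fin 2) ℂ)ᴴ)⁻¹))

/-- The defining relation of the Lorentz matrix Λ(A) associated to A ∈ SL(2,ℂ):
`S(A)⁻¹ γ^μ S(A) = Σ_ν Λ^μ_ν γ^ν`. -/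
def LorentzRel (A : Matrix.SpecialLinearGroup (Fin 2) ℂ) (Λ : Matrix (Fin 4) (Fin 4) ℝ) : Prop :=
  ∀ μ : Fin 4, (Smap A)⁻¹ * γ μ * Smap A = ∑ ν : Fin 4, ((Λ μ ν : ℝ) : ℂ) • γ ν

/-!
In block form `γ^μ = [[0, adj σ^μ], [σ^μ, 0]]` with `σ^μ = (I, σ₁, σ₂, σ₃)`, and conjugation by
`S(A)` replaces the block `H = σ^μ` by `A† H A` and, because `det A = 1`, the block `adj H` by
`adj (A† H A)`. Since `A† σ^μ A` is Hermitian it is a real combination of the `σ^ν`, and these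
coefficients form `Λ(A)`; they are unique because the `γ^ν` are linearly independent.
Conjugation preserves `tr (γ^μ γ^ν) = 4 η^{μν}`, which gives `Λ η Λᵀ = η`, hence `Λᵀ η Λ = η`
as `η² = 1`. Multiplicativity of `S` makes `A ↦ Λ(A)` a homomorphism.
-/

section Conjugation

variable {n ι : Type*} [Fintype n] [Fintype ι] (e : ι → Matrix n n ℂ)

theorem conj_mul_eq_sum_of_conj [DecidableEq n] {P Q : Matrix n n ℂ} {ΛP ΛQ : Matrix ι ι ℝ}
    (hP : ∀ μ, P⁻¹ * e μ * P = ∑ ν, (ΛP μ ν : ℂ) • e ν)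
    (hQ : ∀ μ, Q⁻¹ * e μ * Q = ∑ ν, (ΛQ μ ν : ℂ) • e ν) (μ : ι) :
    (P * Q)⁻¹ * e μ * (P * Q) = ∑ ν, ((ΛP * ΛQ) μ ν : ℂ) • e ν := by
  calc (P * Q)⁻¹ * e μ * (P * Q) = Q⁻¹ * (P⁻¹ * e μ * P) * Q := by
        simp only [Matrix.mul_inv_rev, Matrix.mul_assoc]
    _ = ∑ ρ, (ΛP μ ρ : ℂ) • ∑ ν, (ΛQ ρ ν : ℂ) • e ν := by
        simp only [hP, Finset.mul_sum, Finset.sum_mul, Matrix.mul_smul, Matrix.smul_mul, hQ]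
    _ = ∑ ν, ((ΛP * ΛQ) μ ν : ℂ) • e ν := by
        simp only [Finset.smul_sum, smul_smul, Matrix.mul_apply, Complex.ofReal_sum,
          Complex.ofReal_mul, Finset.sum_smul]
        exact Finset.sum_comm

theorem trace_sum_smul_mul_sum_smul {G : Matrix ι ι ℝ}
    (hG : ∀ μ ν, trace (e μ * e ν) = G μ ν) (a b : ι → ℝ) :
    trace ((∑ ρ, (a ρ : ℂ) • e ρ) * ∑ σ, (b σ : ℂ) • e σ) = (a ᵥ* G ⬝ᵥ b : ℝ) := by
  simp only [Finset.sum_mul, Finset.mul_sum, Matrix.smul_mul, Matrix.mul_smul, trace_sum,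
    trace_smul, hG, smul_eq_mul, vecMul, dotProduct, Complex.ofReal_sum, Complex.ofReal_mul]
  exact Finset.sum_congr rfl fun ρ _ => Finset.sum_congr rfl fun σ _ => by ring

theorem mul_mul_transpose_eq_of_conj [DecidableEq n] {P : Matrix n n ℂ} (hP : IsUnit P.det)
    {G Λ : Matrix ι ι ℝ} (hG : ∀ μ ν, trace (e μ * e ν) = G μ ν)
    (hΛ : ∀ μ, P⁻¹ * e μ * P = ∑ ν, (Λ μ ν : ℂ) • e ν) : Λ * G * Λᵀ = G := by
  ext μ ν
  apply Complex.ofReal_injective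
  have hPP : P * P⁻¹ = 1 := mul_nonsing_inv P hP
  calc (((Λ * G * Λᵀ) μ ν : ℝ) : ℂ) = trace ((P⁻¹ * e μ * P) * (P⁻¹ * e ν * P)) := by
        rw [hΛ, hΛ, trace_sum_smul_mul_sum_smul e hG]
        simp only [mul_apply, transpose_apply, vecMul, dotProduct]
    _ = trace (P⁻¹ * (e μ * e ν) * P) := by
        simp only [Matrix.mul_assoc, ← Matrix.mul_assoc P P⁻¹, hPP, Matrix.one_mul]
    _ = G μ ν := by rw [trace_mul_cycle, hPP, Matrix.one_mul, hG]

end Conjugation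

theorem transpose_mul_mul_eq_of_mul_mul_transpose_eq {R m : Type*} [CommRing R] [Fintype m]
    [DecidableEq m] {η Λ : Matrix m m R} (hη : η * η = 1) (h : Λ * η * Λᵀ = η) :
    Λᵀ * η * Λ = η := by
  have hinv : η * Λᵀ * η * Λ = 1 :=
    mul_eq_one_comm.mp (by simp only [← Matrix.mul_assoc, h, hη])
  calc Λᵀ * η * Λ = η * (η * Λᵀ * η * Λ) := by simp only [← Matrix.mul_assoc, hη, Matrix.one_mul]
    _ = η := by rw [hinv, Matrix.mul_one]

theorem reindex_mul_reindex {R m n : Type*} [Semiring R] [Fintype m] [Fintype n] (e : m ≃ n)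
    (M N : Matrix m m R) : reindex e e M * reindex e e N = reindex e e (M * N) := by
  simp only [reindex_apply, submatrix_mul_equiv]

theorem inv_eq_adjugate_of_det_eq_one {R n : Type*} [CommRing R] [Fintype n] [DecidableEq n]
    {M : Matrix n n R} (h : M.det = 1) : M⁻¹ = adjugate M := by
  rw [inv_def, h, Ring.inverse_one, one_smul]

theorem Matrix.SpecialLinearGroup.det_conjTranspose_coe {n R : Type*} [Fintype n] [DecidableEq n]
    [CommRing R] [StarRing R] (A : SpecialLinearGroup n R) : ((A : Matrix n n R)ᴴ).det = 1 := by
  rw [det_conjTranspose, A.det_coe, star_one]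

def pauli : Fin 4 → Matrix (Fin 2) (Fin 2) ℂ :=
  ![1, !![0, 1; 1, 0], !![0, -Complex.I; Complex.I, 0], !![1, 0; 0, -1]]

theorem pauli_isHermitian (μ : Fin 4) : (pauli μ).IsHermitian := by
  fin_cases μ <;>
    · ext i j
      fin_cases i <;> fin_cases j <;> simp [pauli, conjTranspose_apply, one_apply]

def pauliCoeffs (H : Matrix (Fin 2) (Fin 2) ℂ) : Fin 4 → ℝ :=
  ![((H 0 0).re + (H 1 1).re) / 2, (H 1 0).re, (H 1 0).im, ((H 0 0).re - (H 1 1).re) / 2]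

theorem Matrix.IsHermitian.sum_pauliCoeffs_smul_pauli {H : Matrix (Fin 2) (Fin 2) ℂ}
    (hH : H.IsHermitian) : ∑ ν, (pauliCoeffs H ν : ℂ) • pauli ν = H := by
  have h00 : (H 0 0).im = 0 := Complex.conj_eq_iff_im.mp (hH.apply 0 0)
  have h11 : (H 1 1).im = 0 := Complex.conj_eq_iff_im.mp (hH.apply 1 1)
  have h01 : H 0 1 = star (H 1 0) := (hH.apply 0 1).symm
  ext i j
  fin_cases i <;> fin_cases j <;>
    apply Complex.ext <;>
    simp [Fin.sum_univ_four, pauliCoeffs, pauli, h00, h11, h01] <;> ring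

theorem adjugate_add_fin_two {R : Type*} [CommRing R] (A B : Matrix (Fin 2) (Fin 2) R) :
    adjugate (A + B) = adjugate A + adjugate B := by
  ext i j
  fin_cases i <;> fin_cases j <;> simp [adjugate_fin_two, add_comm]

def chiralBlock : Matrix (Fin 2) (Fin 2) ℂ →ₗ[ℂ] Matrix (Fin 4) (Fin 4) ℂ where
  toFun H := reindexLinearEquiv ℂ ℂ finSumFinEquiv finSumFinEquiv (fromBlocks 0 (adjugate H) H 0)
  map_add' H K := by rw [adjugate_add_fin_two, ← map_add, fromBlocks_add, add_zero]
  map_smul' c H := by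
    rw [adjugate_smul, Fintype.card_fin, pow_one, RingHom.id_apply, ← map_smul, fromBlocks_smul,
      smul_zero]

theorem chiralBlock_apply (H : Matrix (Fin 2) (Fin 2) ℂ) :
    chiralBlock H = reindex finSumFinEquiv finSumFinEquiv (fromBlocks 0 (adjugate H) H 0) :=
  rfl

theorem finSumFinEquiv_symm_two_two :
    ⇑(finSumFinEquiv.symm : Fin (2 + 2) ≃ Fin 2 ⊕ Fin 2) =
      ![Sum.inl 0, Sum.inl 1, Sum.inr 0, Sum.inr 1] := by
  ext i
  fin_cases i <;> rfl

theorem gamma_eq_chiralBlock (μ : Fin 4) : γ μ = chiralBlock (pauli μ) := by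
  fin_cases μ <;>
    · ext i j
      fin_cases i <;> fin_cases j <;>
        simp [γ, pauli, chiralBlock_apply, adjugate_fin_two, finSumFinEquiv_symm_two_two]

section Spinor

variable (A B : Matrix.SpecialLinearGroup (Fin 2) ℂ)

theorem Smap_mul : Smap (A * B) = Smap A * Smap B := by
  simp only [Smap, reindex_mul_reindex, fromBlocks_multiply, Matrix.SpecialLinearGroup.coe_mul,
    conjTranspose_mul, Matrix.mul_inv_rev, Matrix.mul_zero, Matrix.zero_mul, add_zero, zero_add]

theorem reindex_fromBlocks_mul_Smap :
    reindex finSumFinEquiv finSumFinEquiv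
        (fromBlocks (adjugate (A : Matrix (Fin 2) (Fin 2) ℂ)) 0 0 (A : Matrix (Fin 2) (Fin 2) ℂ)ᴴ) *
      Smap A = 1 := by
  rw [Smap, reindex_mul_reindex, fromBlocks_multiply, adjugate_mul, A.det_coe, one_smul,
    mul_nonsing_inv _ (by rw [A.det_conjTranspose_coe]; exact isUnit_one)]
  simp

theorem Smap_inv : (Smap A)⁻¹ = reindex finSumFinEquiv finSumFinEquiv
    (fromBlocks (adjugate (A : Matrix (Fin 2) (Fin 2) ℂ)) 0 0 (A : Matrix (Fin 2) (Fin 2) ℂ)ᴴ) :=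
  inv_eq_left_inv (reindex_fromBlocks_mul_Smap A)

theorem isUnit_det_Smap : IsUnit (Smap A).det :=
  isUnit_det_of_left_inverse (reindex_fromBlocks_mul_Smap A)

theorem Smap_inv_mul_chiralBlock_mul (H : Matrix (Fin 2) (Fin 2) ℂ) :
    (Smap A)⁻¹ * chiralBlock H * Smap A =
      chiralBlock ((A : Matrix (Fin 2) (Fin 2) ℂ)ᴴ * H * A) := by
  rw [Smap_inv, chiralBlock_apply, chiralBlock_apply, Smap, reindex_mul_reindex,
    reindex_mul_reindex, fromBlocks_multiply, fromBlocks_multiply,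
    inv_eq_adjugate_of_det_eq_one A.det_conjTranspose_coe, adjugate_mul_distrib,
    adjugate_mul_distrib]
  simp only [Matrix.mul_zero, Matrix.zero_mul, add_zero, zero_add, Matrix.mul_assoc]

end Spinor

theorem gamma_linearIndependent : LinearIndependent ℂ γ := by
  rw [Fintype.linearIndependent_iff]
  intro g hg
  have h20 : g 0 + g 3 = 0 := by simpa [Fin.sum_univ_four, γ] using congrFun (congrFun hg 2) 0
  have h21 : g 1 - g 2 * Complex.I = 0 := by
    simpa [Fin.sum_univ_four, γ, sub_eq_add_neg] using congrFun (congrFun hg 2) 1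
  have h30 : g 1 + g 2 * Complex.I = 0 := by
    simpa [Fin.sum_univ_four, γ] using congrFun (congrFun hg 3) 0
  have h31 : g 0 - g 3 = 0 := by
    simpa [Fin.sum_univ_four, γ, sub_eq_add_neg] using congrFun (congrFun hg 3) 1
  intro ν
  fin_cases ν <;> simp only [Fin.zero_eta, Fin.mk_one, Fin.reduceFinMk]
  · linear_combination (h20 + h31) / 2
  · linear_combination (h21 + h30) / 2
  · linear_combination (-Complex.I / 2) * (h30 - h21) + g 2 * Complex.I_sq
  · linear_combination (h20 - h31) / 2

theorem sum_ofReal_smul_gamma_injective :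
    Function.Injective fun c : Fin 4 → ℝ => ∑ ν, (c ν : ℂ) • γ ν := by
  intro c d h
  have hcd := Fintype.linearIndependent_iff.mp gamma_linearIndependent
    (fun ν => (c ν - d ν : ℂ)) (by simpa only [sub_smul, Finset.sum_sub_distrib, sub_eq_zero])
  funext ν
  exact_mod_cast sub_eq_zero.mp (hcd ν)

theorem trace_gamma_mul_gamma (μ ν : Fin 4) : trace (γ μ * γ ν) = ((4 : ℝ) • ηR) μ ν := by
  fin_cases μ <;> fin_cases ν <;>
    simp [γ, ηR, trace, Fin.sum_univ_four] <;> norm_num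

theorem ηR_mul_self : ηR * ηR = 1 := by
  rw [ηR, diagonal_mul_diagonal, ← diagonal_one]
  congr 1
  ext i
  fin_cases i <;> simp

namespace LorentzRel

variable {A B : Matrix.SpecialLinearGroup (Fin 2) ℂ} {Λ Λ' : Matrix (Fin 4) (Fin 4) ℝ}

theorem eq (h : LorentzRel A Λ) (h' : LorentzRel A Λ') : Λ = Λ' := by
  funext μ
  exact sum_ofReal_smul_gamma_injective ((h μ).symm.trans (h' μ))

theorem transpose_mul_ηR_mul (h : LorentzRel A Λ) : Λᵀ * ηR * Λ = ηR := by
  refine transpose_mul_mul_eq_of_mul_mul_transpose_eq ηR_mul_self ?_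
  have h4 : Λ * ((4 : ℝ) • ηR) * Λᵀ = (4 : ℝ) • ηR :=
    mul_mul_transpose_eq_of_conj γ (isUnit_det_Smap A) trace_gamma_mul_gamma h
  rwa [Matrix.mul_smul, Matrix.smul_mul, smul_right_inj four_ne_zero] at h4

theorem mul (hA : LorentzRel A Λ) (hB : LorentzRel B Λ') : LorentzRel (A * B) (Λ * Λ') := by
  intro μ
  rw [Smap_mul]
  exact conj_mul_eq_sum_of_conj γ hA hB μ

end LorentzRel

def lorentzOf (A : Matrix.SpecialLinearGroup (Fin 2) ℂ) : Matrix (Fin 4) (Fin 4) ℝ :=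
  of fun μ => pauliCoeffs ((A : Matrix (Fin 2) (Fin 2) ℂ)ᴴ * pauli μ * A)

theorem lorentzRel_lorentzOf (A : Matrix.SpecialLinearGroup (Fin 2) ℂ) :
    LorentzRel A (lorentzOf A) := by
  intro μ
  have hH := isHermitian_conjTranspose_mul_mul (A : Matrix (Fin 2) (Fin 2) ℂ) (pauli_isHermitian μ)
  rw [gamma_eq_chiralBlock, Smap_inv_mul_chiralBlock_mul, ← hH.sum_pauliCoeffs_smul_pauli]
  simp only [map_sum, map_smul, ← gamma_eq_chiralBlock, lorentzOf, of_apply]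

/-- For every A ∈ SL(2,ℂ) there is a unique real matrix Λ(A) with
`S(A)⁻¹ γ^μ S(A) = Σ_ν Λ(A)^μ_ν γ^ν`; any such Λ satisfies `Λᵀ η Λ = η`
(it is a Lorentz transformation), and A ↦ Λ(A) is multiplicative. -/
theorem covering_homomorphism :
    (∀ A : Matrix.SpecialLinearGroup (Fin 2) ℂ, ∃! Λ : Matrix (Fin 4) (Fin 4) ℝ, LorentzRel A Λ) ∧
    (∀ (A : Matrix.SpecialLinearGroup (Fin 2) ℂ) (Λ : Matrix (Fin 4) (Fin 4) ℝ),
      LorentzRel A Λ → Λᵀ * ηR * Λ = ηR) ∧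
    (∀ (A B : Matrix.SpecialLinearGroup (Fin 2) ℂ) (ΛA ΛB : Matrix (Fin 4) (Fin 4) ℝ),
      LorentzRel A ΛA → LorentzRel B ΛB → LorentzRel (A * B) (ΛA * ΛB)) :=
  ⟨fun A => ⟨lorentzOf A, lorentzRel_lorentzOf A, fun _ h => h.eq (lorentzRel_lorentzOf A)⟩,
    fun _ _ h => h.transpose_mul_ηR_mul, fun _ _ _ _ hA hB => hA.mul hB⟩
end
end

section
/- Anti-chronological products are the convolution inverse of chronological products: let R be a (possibly noncommutative) ring with 1, ι a type, and T a function from finite subsets of ι to R with T(∅) = 1. Define T̄(∅) = 1 and, for nonempty finite X, T̄(X) := Σ_{r=1}^{|X|} (−1)^{r+|X|} Σ T(X₁)⋯T(X_r), where the inner sum runs over all ordered partitions (X₁,…,X_r) of X into r pairwise disjoint nonempty subsets with union X. Then for every nonempty finite X ⊆ ι: Σ_{Y ⊆ X} (−1)^{|X∖Y|} T(Y) T̄(X∖Y) = 0 and Σ_{Y ⊆ X} (−1)^{|Y|} T̄(Y) T(X∖Y) = 0. -/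
/-!
Write `S(X) := (-1)^{|X|} T̄(X) = Σ_r (-1)^r A_r(X)`, where `A_r(X)` sums `T(X₁)⋯T(X_r)` over
the ordered partitions of `X` into `r` nonempty blocks (so `A_0(∅) = 1`). Splitting off the
first block gives `A_{r+1}(X) = Σ_{∅ ≠ Y ⊆ X} T(Y) A_r(X \ Y)`; with alternating signs this
becomes `Σ_{Y ⊆ X} T(Y) S(X \ Y) = 0` for nonempty `X` (the `Y = ∅` term is `S(X)` since
`T(∅) = 1`), which is the first identity. The second one is the first one in `Rᵐᵒᵖ`: reversing the
order of the blocks permutes the ordered partitions, so `S` built from `op ∘ T` is `op ∘ S`.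
-/

open Finset
open scoped Classical

noncomputable section

/-- The anti-chronological products T̄ built from chronological products T:
`T̄(∅) = 1` and, for nonempty X,
`T̄(X) := Σ_{r=1}^{|X|} (−1)^{r+|X|} Σ_{(X₁,…,X_r)} T(X₁)⋯T(X_r)`,
the inner sum running over all ordered partitions of X into r pairwise disjoint
nonempty subsets with union X. -/
def Tbar {ι R : Type*} [Ring R] [DecidableEq ι] (T : Finset ι → R) (X : Finset ι) : R :=
  if X = ∅ then 1
  else
    ∑ r ∈ Finset.Icc 1 X.card,
      (-1 : R) ^ (r + X.card) *
        ∑ f ∈ (Fintype.piFinset fun _ : Fin r => X.powerset).filter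
            (fun f => (∀ i, (f i).Nonempty) ∧
              (∀ i j, i ≠ j → Disjoint (f i) (f j)) ∧
              Finset.univ.sup f = X),
          (List.ofFn fun i => T (f i)).prod

theorem List.reverse_ofFn {α : Type*} {n : ℕ} (f : Fin n → α) :
    (List.ofFn f).reverse = List.ofFn (f ∘ Fin.rev) := by
  simp [List.ofFn_eq_map, ← List.map_reverse, List.finRange_reverse, List.map_map]

theorem Fin.sup_univ_cons {α : Type*} [SemilatticeSup α] [OrderBot α] {r : ℕ} (a : α)
    (f : Fin r → α) : univ.sup (Fin.cons a f : Fin (r + 1) → α) = a ⊔ univ.sup f := by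
  rw [Fin.univ_succ, sup_cons, sup_map]
  rfl

theorem Finset.sum_powerset_sdiff_comm {α M : Type*} [DecidableEq α] [AddCommMonoid M]
    (X : Finset α) (g : Finset α → Finset α → M) :
    ∑ Y ∈ X.powerset, g Y (X \ Y) = ∑ Y ∈ X.powerset, g (X \ Y) Y :=
  sum_nbij' (X \ ·) (X \ ·) (by simp) (by simp) (by simp_all) (by simp_all) (by simp_all)

section OrderedPartitions

variable {ι R : Type*} [DecidableEq ι]

def orderedPartitions (X : Finset ι) (r : ℕ) : Finset (Fin r → Finset ι) :=
  (Fintype.piFinset fun _ : Fin r => X.powerset).filter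
    (fun f => (∀ i, (f i).Nonempty) ∧
      (∀ i j, i ≠ j → Disjoint (f i) (f j)) ∧
      Finset.univ.sup f = X)

theorem mem_orderedPartitions {X : Finset ι} {r : ℕ} {f : Fin r → Finset ι} :
    f ∈ orderedPartitions X r ↔ (∀ i, (f i).Nonempty) ∧
      (∀ i j, i ≠ j → Disjoint (f i) (f j)) ∧ univ.sup f = X := by
  rw [orderedPartitions, mem_filter, Fintype.mem_piFinset, and_iff_right_iff_imp]
  rintro ⟨-, -, rfl⟩ i
  exact mem_powerset.2 (le_sup (mem_univ i))

theorem cons_mem_orderedPartitions {X Y : Finset ι} {r : ℕ} {g : Fin r → Finset ι} :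
    Fin.cons Y g ∈ orderedPartitions X (r + 1) ↔
      (Y ⊆ X ∧ Y.Nonempty) ∧ g ∈ orderedPartitions (X \ Y) r := by
  have hsplit : ∀ S : Finset ι, Disjoint Y S ∧ Y ∪ S = X ↔ Y ⊆ X ∧ S = X \ Y := fun S =>
    ⟨fun ⟨hd, hu⟩ => hu ▸ ⟨subset_union_left, (union_sdiff_cancel_left hd).symm⟩,
      fun ⟨hY, hS⟩ => hS ▸ ⟨disjoint_sdiff, union_sdiff_of_subset hY⟩⟩
  have hdisj : (∀ i, Disjoint Y (g i)) ↔ Disjoint Y (univ.sup g) := by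
    rw [Finset.disjoint_sup_right]; simp
  simp only [mem_orderedPartitions, Fin.forall_fin_succ, Fin.cons_zero, Fin.cons_succ,
    ne_eq, not_true_eq_false, Fin.succ_ne_zero, not_false_eq_true, Fin.succ_inj,
    forall_const, IsEmpty.forall_iff, Fin.sup_univ_cons, sup_eq_union, (Fin.succ_ne_zero _).symm,
    true_and, disjoint_comm (b := Y), forall_and, hdisj]
  have := hsplit (univ.sup g)
  tauto

theorem card_le_of_mem_orderedPartitions {X : Finset ι} {r : ℕ} {f : Fin r → Finset ι}
    (hf : f ∈ orderedPartitions X r) : r ≤ X.card := by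
  obtain ⟨hne, hdisj, rfl⟩ := mem_orderedPartitions.1 hf
  calc r = ∑ _i : Fin r, 1 := by simp
    _ ≤ ∑ i, (f i).card := sum_le_sum fun i _ => (hne i).card_pos
    _ = (univ.sup f).card := by
      rw [sup_eq_biUnion, card_biUnion fun i _ j _ hij => hdisj i j hij]

theorem orderedPartitions_zero (X : Finset ι) :
    orderedPartitions X 0 = if X = ∅ then {Fin.elim0} else ∅ := by
  ext f
  rw [mem_orderedPartitions]
  split_ifs with hX <;> simp [hX, eq_comm, Subsingleton.elim f Fin.elim0]

variable [Ring R]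

def partitionProductSum (T : Finset ι → R) (X : Finset ι) (r : ℕ) : R :=
  ∑ f ∈ orderedPartitions X r, (List.ofFn fun i => T (f i)).prod

theorem partitionProductSum_zero (T : Finset ι → R) (X : Finset ι) :
    partitionProductSum T X 0 = if X = ∅ then 1 else 0 := by
  rw [partitionProductSum, orderedPartitions_zero]
  split_ifs <;> simp

theorem partitionProductSum_eq_zero_of_card_lt (T : Finset ι → R) {X : Finset ι} {r : ℕ}
    (h : X.card < r) : partitionProductSum T X r = 0 :=
  sum_eq_zero fun _ hf => absurd (card_le_of_mem_orderedPartitions hf) h.not_ge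

theorem partitionProductSum_succ (T : Finset ι → R) (X : Finset ι) (r : ℕ) :
    partitionProductSum T X (r + 1) =
      ∑ Y ∈ X.powerset.filter (·.Nonempty), T Y * partitionProductSum T (X \ Y) r := by
  simp only [partitionProductSum, mul_sum]
  rw [sum_sigma']
  refine sum_bij' (fun f _ => ⟨f 0, Fin.tail f⟩) (fun p _ => Fin.cons p.1 p.2) ?_ ?_
    (fun f _ => Fin.cons_self_tail f) (fun p _ => rfl) ?_
  · intro f hf
    rw [← Fin.cons_self_tail f, cons_mem_orderedPartitions] at hf
    simpa using hf
  · intro p hp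
    rw [cons_mem_orderedPartitions]
    simpa using hp
  · intro f _
    rw [List.ofFn_succ, List.prod_cons]
    rfl

def signedPartitionSum (T : Finset ι → R) (X : Finset ι) : R :=
  ∑ r ∈ range (X.card + 1), (-1 : R) ^ r * partitionProductSum T X r

theorem signedPartitionSum_eq_sum_range (T : Finset ι → R) {X : Finset ι} {n : ℕ}
    (hn : X.card < n) :
    signedPartitionSum T X = ∑ r ∈ range n, (-1 : R) ^ r * partitionProductSum T X r := by
  refine sum_subset (range_subset_range.2 hn) fun r _ hr => ?_
  rw [mem_range, not_lt] at hr
  rw [partitionProductSum_eq_zero_of_card_lt T (by omega), mul_zero]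

theorem sum_nonempty_mul_signedPartitionSum (T : Finset ι → R) {X : Finset ι}
    (hX : X.Nonempty) :
    ∑ Y ∈ X.powerset.filter (·.Nonempty), T Y * signedPartitionSum T (X \ Y) =
      -signedPartitionSum T X := by
  have hlt : ∀ Y ∈ X.powerset.filter (·.Nonempty), (X \ Y).card < X.card := by
    intro Y hY
    rw [mem_filter, mem_powerset] at hY
    exact card_lt_card (sdiff_ssubset hY.1 hY.2)
  calc ∑ Y ∈ X.powerset.filter (·.Nonempty), T Y * signedPartitionSum T (X \ Y)
      = ∑ r ∈ range X.card, (-1 : R) ^ r *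
          ∑ Y ∈ X.powerset.filter (·.Nonempty), T Y * partitionProductSum T (X \ Y) r := by
        -- `|X \ Y| < |X|`, so every signed sum on the left may run over `range |X|`
        simp only [mul_sum]
        rw [sum_comm]
        refine sum_congr rfl fun Y hY => ?_
        rw [signedPartitionSum_eq_sum_range T (hlt Y hY), mul_sum]
        refine sum_congr rfl fun r _ => ?_
        rw [← mul_assoc, ← mul_assoc, ((Commute.neg_one_left _).pow_left r).eq]
    _ = ∑ r ∈ range X.card, -((-1 : R) ^ (r + 1) * partitionProductSum T X (r + 1)) := by
        simp only [partitionProductSum_succ, pow_succ, mul_neg_one, neg_mul, neg_neg]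
    _ = -signedPartitionSum T X := by
        rw [signedPartitionSum, sum_range_succ', partitionProductSum_zero,
          if_neg hX.ne_empty, mul_zero, add_zero, sum_neg_distrib]

theorem sum_powerset_mul_signedPartitionSum (T : Finset ι → R) (hT : T ∅ = 1)
    {X : Finset ι} (hX : X.Nonempty) :
    ∑ Y ∈ X.powerset, T Y * signedPartitionSum T (X \ Y) = 0 := by
  rw [← sum_filter_add_sum_filter_not X.powerset (·.Nonempty),
    sum_nonempty_mul_signedPartitionSum T hX]
  have hempty : X.powerset.filter (fun Y => ¬Y.Nonempty) = {∅} := by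
    ext Y
    simp +contextual [not_nonempty_iff_eq_empty]
  rw [hempty, sum_singleton, hT, one_mul, sdiff_empty, neg_add_cancel]

theorem neg_one_pow_card_mul_Tbar (T : Finset ι → R) (X : Finset ι) :
    (-1 : R) ^ X.card * Tbar T X = signedPartitionSum T X := by
  rcases eq_or_ne X ∅ with rfl | hX
  · simp [Tbar, signedPartitionSum, partitionProductSum_zero]
  have hsign : ∀ r, (-1 : R) ^ X.card * (-1) ^ (r + X.card) = (-1) ^ r := fun r => by
    rw [← pow_add, add_left_comm, ← two_mul, pow_add, pow_mul, neg_one_sq, one_pow, mul_one]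
  rw [Tbar, if_neg hX, signedPartitionSum, sum_range_succ', partitionProductSum_zero, if_neg hX,
    mul_zero, add_zero, mul_sum, ← Ico_add_one_right_eq_Icc, sum_Ico_eq_sum_range]
  refine sum_congr (by simp) fun r _ => ?_
  rw [← mul_assoc, hsign, add_comm 1 r]
  rfl

theorem comp_perm_mem_orderedPartitions {X : Finset ι} {r : ℕ} {f : Fin r → Finset ι}
    (σ : Equiv.Perm (Fin r)) (hf : f ∈ orderedPartitions X r) :
    f ∘ σ ∈ orderedPartitions X r := by
  obtain ⟨hne, hdisj, hsup⟩ := mem_orderedPartitions.1 hf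
  refine mem_orderedPartitions.2 ⟨fun i => hne (σ i),
    fun i j hij => hdisj (σ i) (σ j) (σ.injective.ne hij), ?_⟩
  simpa [hsup] using (sup_map univ σ.toEmbedding f).symm

theorem sum_orderedPartitions_comp_perm {M : Type*} [AddCommMonoid M] (X : Finset ι) (r : ℕ)
    (σ : Equiv.Perm (Fin r)) (g : (Fin r → Finset ι) → M) :
    ∑ f ∈ orderedPartitions X r, g (f ∘ σ) = ∑ f ∈ orderedPartitions X r, g f :=
  sum_nbij' (· ∘ σ) (· ∘ σ.symm) (fun _ hf => comp_perm_mem_orderedPartitions σ hf)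
    (fun _ hf => comp_perm_mem_orderedPartitions σ.symm hf)
    (fun f _ => by simp [Function.comp_assoc]) (fun f _ => by simp [Function.comp_assoc])
    (fun _ _ => rfl)

open MulOpposite in
theorem partitionProductSum_op (T : Finset ι → R) (X : Finset ι) (r : ℕ) :
    partitionProductSum (op ∘ T) X r = op (partitionProductSum T X r) := by
  rw [partitionProductSum, partitionProductSum, op_sum,
    ← sum_orderedPartitions_comp_perm X r Fin.revPerm]
  refine sum_congr rfl fun f _ => ?_
  rw [op_list_prod, List.map_ofFn, List.reverse_ofFn]
  rfl

open MulOpposite in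
theorem signedPartitionSum_op (T : Finset ι → R) (X : Finset ι) :
    signedPartitionSum (op ∘ T) X = op (signedPartitionSum T X) := by
  simp only [signedPartitionSum, partitionProductSum_op, op_sum, op_mul, op_pow, op_neg, op_one,
    ((Commute.neg_one_left _).pow_left _).eq]

open MulOpposite in
theorem sum_powerset_signedPartitionSum_mul (T : Finset ι → R) (hT : T ∅ = 1)
    {X : Finset ι} (hX : X.Nonempty) :
    ∑ Y ∈ X.powerset, signedPartitionSum T Y * T (X \ Y) = 0 := by
  apply op_injective
  have hT' : (op ∘ T) ∅ = 1 := by simp [hT]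
  rw [op_sum, op_zero, ← sum_powerset_mul_signedPartitionSum (op ∘ T) hT' hX,
    sum_powerset_sdiff_comm X fun Y Z => op (signedPartitionSum T Y * T Z)]
  simp only [op_mul, signedPartitionSum_op, Function.comp_apply]

end OrderedPartitions

/-- Anti-chronological products are the convolution inverse of chronological products:
for every nonempty finite X, `Σ_{Y ⊆ X} (−1)^{|X∖Y|} T(Y) T̄(X∖Y) = 0` and
`Σ_{Y ⊆ X} (−1)^{|Y|} T̄(Y) T(X∖Y) = 0`. -/
theorem antichronological_convolution_inverse
    {ι R : Type*} [Ring R] [DecidableEq ι] (T : Finset ι → R) (hT : T ∅ = 1) :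
    ∀ X : Finset ι, X.Nonempty →
      (∑ Y ∈ X.powerset, (-1 : R) ^ (X \ Y).card * (T Y * Tbar T (X \ Y)) = 0) ∧
      (∑ Y ∈ X.powerset, (-1 : R) ^ Y.card * (Tbar T Y * T (X \ Y)) = 0) := by
  intro X hX
  constructor
  · simpa only [((Commute.neg_one_left _).pow_left _).left_comm, neg_one_pow_card_mul_Tbar]
      using sum_powerset_mul_signedPartitionSum T hT hX
  · simpa only [← mul_assoc, neg_one_pow_card_mul_Tbar]
      using sum_powerset_signedPartitionSum_mul T hT hX
end
end
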